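/- Let (P,≻,q) be a problem in which all schools have a common priority order and let k > 1. Then SD^k(P,≻,q) is stable at (P,≻,q) if and only if the constrained serial dictatorship mechanism SD^k is not manipulable at (P,≻,q). -/

import Mathlib

/-!
School choice framework following Bonkoungou–Nesterov,
"Reforms meet fairness concerns in school and college admissions".

Students `I` and schools `S` are finite types with `|I| > |S|`.
A strict preference relation of a student over `S ∪ {∅}` is represented by a list
of `Option S` containing every element exactly once (earlier = more preferred);
`none` is the outside option.  A strict priority order of a school is a list of
`I` containing every student exactly once (earlier = higher priority).
-/

namespace SchoolChoice

variable {I S : Type*} [Fintype I] [DecidableEq I] [Fintype S] [DecidableEq S]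

/-- `p` is a strict preference relation on `S ∪ {∅}`: a ranking list containing every
element of `Option S` exactly once. -/
def ValidPref (p : List (Option S)) : Prop := p.Nodup ∧ ∀ x : Option S, x ∈ p

/-- `pr` is a strict priority order: a ranking list containing every student exactly once. -/
def ValidPrio (pr : List I) : Prop := pr.Nodup ∧ ∀ i : I, i ∈ pr

/-- `a` is strictly preferred to `b` under the preference relation `p`. -/
def prefLt (p : List (Option S)) (a b : Option S) : Prop := p.idxOf a < p.idxOf b

/-- `i` has strictly higher priority than `j` under the priority order `pr`. -/
def prioLt (pr : List I) (i j : I) : Prop := pr.idxOf i < pr.idxOf j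

instance (p : List (Option S)) (a b : Option S) : Decidable (prefLt p a b) :=
  inferInstanceAs (Decidable (_ < _))

instance (pr : List I) (i j : I) : Decidable (prioLt pr i j) :=
  inferInstanceAs (Decidable (_ < _))

/-- The acceptable schools of `p` (those preferred to the outside option), in preference
order. -/
def acceptables (p : List (Option S)) : List S := (p.takeWhile Option.isSome).filterMap id

/-- The truncation of `p` after its `k`-th acceptable school: the preference relation
listing, in the same order, only the `min k _` most-preferred acceptable schools of `p`,
all other schools being unacceptable (kept below `none` in their original order). -/
def truncate (p : List (Option S)) (k : ℕ) : List (Option S) :=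
  ((acceptables p).take k).map some ++
    none :: p.filter (fun x => decide (x ≠ none ∧ x ∉ ((acceptables p).take k).map some))

/-- `μ` is a matching: it respects the capacities `q`. -/
def IsMatching (q : S → ℕ) (μ : I → Option S) : Prop :=
  ∀ s : S, (Finset.univ.filter (fun i => μ i = some s)).card ≤ q s

/-- The pair `(i, s)` blocks `μ` under the problem `(P, prio, q)`. -/
def Blocks (P : I → List (Option S)) (prio : S → List I) (q : S → ℕ)
    (μ : I → Option S) (i : I) (s : S) : Prop :=
  prefLt (P i) (some s) (μ i) ∧
    ((Finset.univ.filter (fun j => μ j = some s)).card < q s ∨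
      ∃ j : I, μ j = some s ∧ prioLt (prio s) i j)

/-- `i` is a blocking student for `μ` under `(P, prio, q)`. -/
def BlockingStudent (P : I → List (Option S)) (prio : S → List I) (q : S → ℕ)
    (μ : I → Option S) (i : I) : Prop :=
  ∃ s : S, Blocks P prio q μ i s

/-- `μ` is individually rational under `P`. -/
def IndividuallyRational (P : I → List (Option S)) (μ : I → Option S) : Prop :=
  ∀ i : I, ¬ prefLt (P i) none (μ i)

/-- `μ` is stable at `(P, prio, q)`. -/
def IsStable (P : I → List (Option S)) (prio : S → List I) (q : S → ℕ)
    (μ : I → Option S) : Prop :=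
  IndividuallyRational P μ ∧ ∀ i : I, ¬ BlockingStudent P prio q μ i

/-- The number of blocking students for `μ` under `(P, prio, q)`. -/
noncomputable def numBlocking (P : I → List (Option S)) (prio : S → List I) (q : S → ℕ)
    (μ : I → Option S) : ℕ :=
  {i : I | BlockingStudent P prio q μ i}.ncard

/-! ### The Gale–Shapley student-proposing deferred acceptance mechanism

The state `σ : I → ℕ` records, for each student, how many of her acceptable schools
have already rejected her; she currently applies to the `σ i`-th school on her list
(if any).  At each round every school tentatively keeps the `q s` highest-priority
students among its current applicants and rejects the rest, who move on. -/

/-- The school student `i` currently applies to. -/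
def daTarget (P : I → List (Option S)) (σ : I → ℕ) (i : I) : Option S :=
  (acceptables (P i))[σ i]?

/-- The students tentatively held by school `s`: the `q s` highest-priority current
applicants. -/
def daHeld (P : I → List (Option S)) (prio : S → List I) (q : S → ℕ)
    (σ : I → ℕ) (s : S) : List I :=
  ((prio s).filter (fun i => decide (daTarget P σ i = some s))).take (q s)

/-- One round of deferred acceptance: every rejected student moves to her next choice. -/
def daStep (P : I → List (Option S)) (prio : S → List I) (q : S → ℕ)
    (σ : I → ℕ) : I → ℕ := fun i =>
  match daTarget P σ i with
  | none => σ i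
  | some s => if i ∈ daHeld P prio q σ s then σ i else σ i + 1

/-- The Gale–Shapley (student-proposing deferred acceptance) mechanism.  Iterating the
round map `|I| * |S| + 1` times is guaranteed to reach the terminal state. -/
def GS (P : I → List (Option S)) (prio : S → List I) (q : S → ℕ) : I → Option S :=
  fun i =>
    let σ := (daStep P prio q)^[Fintype.card I * Fintype.card S + 1] (fun _ => 0)
    match daTarget P σ i with
    | none => none
    | some s => if i ∈ daHeld P prio q σ s then some s else none

/-- The constrained Gale–Shapley mechanism `GS^k`. -/
def GSk (k : ℕ) (P : I → List (Option S)) (prio : S → List I) (q : S → ℕ) : I → Option S :=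
  GS (fun i => truncate (P i) k) prio q

/-! ### The Boston (immediate acceptance) mechanism -/

/-- Round `t` of the Boston mechanism: each not-yet-accepted student applies to her
`t`-th ranked acceptable school (0-indexed), and each school permanently accepts, up to
its remaining capacity, its highest-priority new applicants. -/
def bostonRound (P : I → List (Option S)) (prio : S → List I) (q : S → ℕ)
    (μ : I → Option S) (t : ℕ) : I → Option S := fun i =>
  match μ i with
  | some s => some s
  | none =>
    match (acceptables (P i))[t]? with
    | none => none
    | some s =>
      if i ∈ ((prio s).filter
            (fun j => decide (μ j = none ∧ (acceptables (P j))[t]? = some s))).take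
          (q s - (Finset.univ.filter (fun j => μ j = some s)).card)
      then some s else none

/-- The Boston (immediate acceptance) mechanism. -/
def Boston (P : I → List (Option S)) (prio : S → List I) (q : S → ℕ) : I → Option S :=
  (List.range (Fintype.card S)).foldl (bostonRound P prio q) (fun _ => none)

/-- The constrained Boston mechanism `β^k`. -/
def Bostonk (k : ℕ) (P : I → List (Option S)) (prio : S → List I) (q : S → ℕ) :
    I → Option S :=
  Boston (fun i => truncate (P i) k) prio q

/-! ### The first-preference-first mechanism -/

/-- The adjusted priority profile: each first-preference-first school (member of `fpf`)
ranks students first by the rank they assign to it under `P` (counting the ranking of the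
outside option as well), ties broken by the original priority; equal-preference schools
keep their original priority. -/
def fpfPrio (fpf : Finset S) (P : I → List (Option S)) (prio : S → List I) : S → List I :=
  fun s =>
    if s ∈ fpf then
      (List.range (Fintype.card S + 1)).flatMap
        (fun r => (prio s).filter (fun i => decide ((P i).idxOf (some s) = r)))
    else prio s

/-- The first-preference-first mechanism with set `fpf` of first-preference-first
schools: Gale–Shapley run on the adjusted priorities. -/
def FPF (fpf : Finset S) (P : I → List (Option S)) (prio : S → List I) (q : S → ℕ) :
    I → Option S :=
  GS P (fpfPrio fpf P prio) q

/-- The constrained first-preference-first mechanism `FPF^k`. -/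
def FPFk (fpf : Finset S) (k : ℕ) (P : I → List (Option S)) (prio : S → List I)
    (q : S → ℕ) : I → Option S :=
  FPF fpf (fun i => truncate (P i) k) prio q

/-! ### Manipulation and equilibrium notions -/

/-- Student `i` is a manipulating student of the mechanism `φ` (with priorities and
capacities fixed) at the true profile `P`. -/
def ManipulatingStudent (φ : (I → List (Option S)) → I → Option S)
    (P : I → List (Option S)) (i : I) : Prop :=
  ∃ Q : List (Option S), ValidPref Q ∧
    prefLt (P i) (φ (Function.update P i Q) i) (φ P i)

/-- The mechanism `φ` is not manipulable at `P`. -/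
def NotManipulable (φ : (I → List (Option S)) → I → Option S)
    (P : I → List (Option S)) : Prop :=
  ∀ i : I, ¬ ManipulatingStudent φ P i

/-- `P'` is a Nash equilibrium of the game `(φ, P)` in which the sophisticated students
are the members of `M` (who may misreport, and best respond) and all other (sincere)
students report truthfully. -/
def NashEq (φ : (I → List (Option S)) → I → Option S) (P : I → List (Option S))
    (M : Finset I) (P' : I → List (Option S)) : Prop :=
  (∀ i, ValidPref (P' i)) ∧ (∀ i ∉ M, P' i = P i) ∧
    ∀ i ∈ M, ∀ Q : List (Option S), ValidPref Q →
      ¬ prefLt (P i) (φ (Function.update P' i Q) i) (φ P' i)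

/-! ### Semi-sophisticated students -/

/-- Student `i` is guaranteed her first choice `s`: `s` is her most-preferred acceptable
school and `i` is among the `q s` highest-priority students at `s`. -/
def GuaranteedFirstChoice (P : I → List (Option S)) (prio : S → List I) (q : S → ℕ)
    (i : I) (s : S) : Prop :=
  (acceptables (P i)).head? = some s ∧ (prio s).idxOf i < q s

instance (P : I → List (Option S)) (prio : S → List I) (q : S → ℕ) (i : I) (s : S) :
    Decidable (GuaranteedFirstChoice P prio q i s) :=
  inferInstanceAs (Decidable (_ ∧ _))

/-- School `s` is competitive: at least `q s` students are guaranteed their first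
choice `s`. -/
def Competitive (P : I → List (Option S)) (prio : S → List I) (q : S → ℕ) (s : S) : Prop :=
  q s ≤ (Finset.univ.filter (fun i => GuaranteedFirstChoice P prio q i s)).card

instance (P : I → List (Option S)) (prio : S → List I) (q : S → ℕ) (s : S) :
    Decidable (Competitive P prio q s) :=
  inferInstanceAs (Decidable (_ ≤ _))

/-- `P'` is a Nash equilibrium of the game `(GS^ℓ, P)` with semi-sophisticated students:
every student guaranteed her first choice reports truthfully; every other student reports
truthfully if she has at most `ℓ` acceptable schools or all her acceptable schools are
competitive, and otherwise lists as acceptable, in the order given by her true preference,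
only her acceptable schools that are not competitive. -/
def SemiSophProfile (ℓ : ℕ) (P : I → List (Option S)) (prio : S → List I) (q : S → ℕ)
    (P' : I → List (Option S)) : Prop :=
  ∀ i : I,
    ((∃ s : S, GuaranteedFirstChoice P prio q i s) → P' i = P i) ∧
    (¬ (∃ s : S, GuaranteedFirstChoice P prio q i s) →
      (((acceptables (P i)).length ≤ ℓ ∨ ∀ s ∈ acceptables (P i), Competitive P prio q s) →
          P' i = P i) ∧
      (¬ ((acceptables (P i)).length ≤ ℓ ∨
            ∀ s ∈ acceptables (P i), Competitive P prio q s) →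
          acceptables (P' i) =
            (acceptables (P i)).filter (fun s => decide (¬ Competitive P prio q s))))

end SchoolChoice

/-!
Under a common priority order, deferred acceptance is serial dictatorship: each student, in
priority order, receives the first school of her list that still has a seat not taken by
higher-priority students. This follows from an invariant of deferred acceptance: from the round
in which a school rejects a student on, it has `q s` applicants of higher priority than her. So the seats left to a student depend only on the reports of higher-priority students, not on her
own. If `(i, s)` blocks `SD^k`, a seat at `s` is left for `i`, and she obtains it by ranking `s`
first, which survives truncation since `k ≥ 1`. Conversely, the school a misreport earns `i` has a
seat left for her, so if she prefers it to her assignment, she blocks.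
-/

theorem List.Nodup.pairwise_idxOf_lt {α : Type*} [BEq α] [LawfulBEq α] {l : List α}
    (hl : l.Nodup) : l.Pairwise (fun a b => l.idxOf a < l.idxOf b) :=
  List.pairwise_iff_getElem.2 fun i j hi hj hij => by
    rwa [hl.idxOf_getElem i hi, hl.idxOf_getElem j hj]

theorem List.Pairwise.lt_of_mem_take {α : Type*} {f : α → ℕ} {c n : ℕ} {l : List α}
    (hl : l.Pairwise (fun a b => f a < f b)) (hn : n ≤ (l.filter (fun x => f x < c)).length)
    {x : α} (hx : x ∈ l.take n) : f x < c := by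
  by_contra hxc
  have hdrop : (l.drop n).filter (fun y => f y < c) = [] :=
    List.filter_eq_nil_iff.2 fun y hy hyc =>
      hxc ((hl.rel_of_mem_take_of_mem_drop hx hy).trans (of_decide_eq_true hyc))
  have htake : ((l.take n).filter (fun y => f y < c)).length < (l.take n).length :=
    List.length_filter_lt_length_iff_exists.2 ⟨x, hx, by simpa using hxc⟩
  rw [← List.take_append_drop n l, List.filter_append, hdrop, List.append_nil] at hn
  have := List.length_take_le n l
  omega

theorem List.find?_eq_getElem?_of_take {α : Type*} {p : α → Bool} {l : List α} {n : ℕ}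
    (hbefore : ∀ x ∈ l.take n, p x = false) (hat : ∀ x ∈ l[n]?, p x = true) :
    l.find? p = l[n]? := by
  conv_lhs => rw [← List.take_append_drop n l, List.find?_append,
    List.find?_eq_none.2 fun x hx => by simp [hbefore x hx], Option.none_or]
  rcases Nat.lt_or_ge n l.length with hn | hn
  · rw [List.drop_eq_getElem_cons hn, List.find?_cons_of_pos (hat _ (by simp))]
    simp
  · simp [List.drop_eq_nil_of_le hn, hn]

theorem Function.isFixedPt_iterate_of_potential {β : Type*} (f : β → β) (m : β → ℕ) (x : β)
    {N : ℕ} (hbound : ∀ t, m (f^[t] x) ≤ N) (hprog : ∀ y, f y ≠ y → m y < m (f y)) :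
    Function.IsFixedPt f (f^[N] x) := by
  by_contra hN
  have hnot : ∀ t ≤ N, f (f^[t] x) ≠ f^[t] x := fun t ht hfix => hN <| by
    rw [show N = (N - t) + t by omega, Function.iterate_add_apply, Function.iterate_fixed hfix]
    exact hfix
  have hgrow : ∀ t ≤ N + 1, t ≤ m (f^[t] x) := by
    intro t
    induction t with
    | zero => intro; omega
    | succ t ih =>
      intro ht
      have := hprog _ (hnot t (by omega))
      rw [Function.iterate_succ_apply']
      have := ih (by omega)
      omega
  have := hgrow (N + 1) le_rfl
  have := hbound (N + 1)
  omega

namespace SchoolChoice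

section Preferences

variable {S : Type*}

theorem acceptables_map_some_append (L : List S) (t : List (Option S)) :
    acceptables (L.map some ++ none :: t) = L := by
  rw [acceptables, List.takeWhile_append_of_pos (by simp)]
  simp [List.filterMap_map]

theorem acceptables_truncate [DecidableEq S] (p : List (Option S)) (k : ℕ) :
    acceptables (truncate p k) = (acceptables p).take k :=
  acceptables_map_some_append _ _

theorem nodup_acceptables {p : List (Option S)} (hp : p.Nodup) : (acceptables p).Nodup :=
  ((p.takeWhile_sublist _).nodup hp).filterMap fun a a' b hb hb' => by
    simp only [id, Option.mem_def] at hb hb'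
    rw [hb, hb']

theorem prefLt_none_of_mem_acceptables [DecidableEq S] {p : List (Option S)} {s : S}
    (hs : s ∈ acceptables p) : prefLt p (some s) none := by
  have hsome : some s ∈ p.takeWhile Option.isSome := by
    obtain ⟨a, ha, rfl⟩ := List.mem_filterMap.1 hs
    exact ha
  have hnone : (none : Option S) ∉ p.takeWhile Option.isSome := fun h => by
    simpa using List.mem_takeWhile_imp h
  unfold prefLt
  rw [← List.takeWhile_append_dropWhile (p := Option.isSome) (l := p)]
  rw [List.idxOf_append_of_mem hsome, List.idxOf_append_of_notMem hnone]
  have := List.idxOf_lt_length_iff.2 hsome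
  omega

theorem nodup_acceptables_truncate [DecidableEq S] {p : List (Option S)} (hp : p.Nodup)
    (k : ℕ) : (acceptables (truncate p k)).Nodup := by
  rw [acceptables_truncate]
  exact (nodup_acceptables hp).sublist (List.take_sublist _ _)

def moveToTop [DecidableEq S] (s : S) (p : List (Option S)) : List (Option S) :=
  some s :: p.erase (some s)

theorem validPref_moveToTop [DecidableEq S] {p : List (Option S)} (hp : ValidPref p) (s : S) :
    ValidPref (moveToTop s p) := by
  have hperm := List.perm_cons_erase (hp.2 (some s))
  exact ⟨hperm.nodup_iff.1 hp.1, fun x => hperm.mem_iff.1 (hp.2 x)⟩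

theorem head?_acceptables_truncate_moveToTop [DecidableEq S] (s : S) (p : List (Option S))
    {k : ℕ} (hk : 0 < k) : (acceptables (truncate (moveToTop s p) k)).head? = some s := by
  obtain ⟨k, rfl⟩ := Nat.exists_eq_add_of_lt hk
  rw [acceptables_truncate]
  simp [moveToTop, acceptables]

end Preferences

section SerialDictatorship

variable {I S : Type*} [Fintype I] [DecidableEq I] [DecidableEq S]

def countAbove (pr : List I) (μ : I → Option S) (i : I) (s : S) : ℕ :=
  (Finset.univ.filter (fun j => pr.idxOf j < pr.idxOf i ∧ μ j = some s)).card

/-- The recursive description of serial dictatorship along `pr`, as a fixed-point equation. -/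
def IsSerialDictatorship (pr : List I) (q : S → ℕ) (R : I → List (Option S))
    (μ : I → Option S) : Prop :=
  ∀ i, μ i = (acceptables (R i)).find? (fun s => decide (countAbove pr μ i s < q s))

variable {pr : List I} {q : S → ℕ} {μ : I → Option S} {i : I} {s : S}

theorem length_filter_eq_card (hpr : ValidPrio pr) (p : I → Prop) [DecidablePred p] :
    (pr.filter (fun i => decide (p i))).length = (Finset.univ.filter p).card := by
  rw [← List.toFinset_card_of_nodup (hpr.1.filter _)]
  congr 1
  ext j
  simp [hpr.2 j]

theorem countAbove_congr {ν : I → Option S} (h : ∀ j, pr.idxOf j < pr.idxOf i → μ j = ν j) :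
    countAbove pr μ i = countAbove pr ν i := by
  funext s
  unfold countAbove
  congr 1
  exact Finset.filter_congr fun j _ => and_congr_right fun hj => by rw [h j hj]

theorem le_countAbove_of_forall_mem {L : List I} (hL : L.Nodup)
    (h : ∀ j ∈ L, pr.idxOf j < pr.idxOf i ∧ μ j = some s) : L.length ≤ countAbove pr μ i s := by
  rw [← List.toFinset_card_of_nodup hL]
  exact Finset.card_le_card fun j hj => by simpa using h j (List.mem_toFinset.1 hj)

theorem countAbove_lt_of_apply_eq_some [Fintype S] (hμ : IsMatching q μ) {j : I}
    (hj : μ j = some s) (hji : ¬ pr.idxOf j < pr.idxOf i) : countAbove pr μ i s < q s := by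
  refine lt_of_lt_of_le (Finset.card_lt_card ?_) (hμ s)
  refine (Finset.ssubset_iff_of_subset fun j' hj' => ?_).2 ⟨j, by simpa using hj, by simp [hji]⟩
  simp only [Finset.mem_filter, Finset.mem_univ, true_and] at hj' ⊢
  exact hj'.2

theorem blocks_iff_countAbove_lt [Fintype S] {P : I → List (Option S)} {prio : S → List I}
    (hpr : ValidPrio pr) (hc : prio s = pr) (hμ : IsMatching q μ) :
    Blocks P prio q μ i s ↔ prefLt (P i) (some s) (μ i) ∧ countAbove pr μ i s < q s := by
  unfold Blocks prioLt
  rw [hc]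
  refine and_congr_right fun hpref => ⟨?_, fun hlt => ?_⟩
  · rintro (hfree | ⟨j, hj, hij⟩)
    · refine lt_of_le_of_lt (Finset.card_le_card fun j hj => ?_) hfree
      simp only [Finset.mem_filter, Finset.mem_univ, true_and] at hj ⊢
      exact hj.2
    · exact countAbove_lt_of_apply_eq_some hμ hj (by omega)
  · by_contra! h
    refine absurd (lt_of_le_of_lt (Finset.card_le_card fun j hj => ?_) hlt) (not_lt.2 h.1)
    have hj : μ j = some s := (Finset.mem_filter.1 hj).2
    have hji : j ≠ i := by
      rintro rfl
      exact lt_irrefl _ (hj ▸ hpref)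
    have := h.2 j hj
    have := mt (List.idxOf_inj (hpr.2 j)).1 hji
    simp only [Finset.mem_filter, Finset.mem_univ, true_and]
    exact ⟨by omega, hj⟩

namespace IsSerialDictatorship

variable {R : I → List (Option S)}

theorem mem_acceptables (hμ : IsSerialDictatorship pr q R μ) (hi : μ i = some s) :
    s ∈ acceptables (R i) :=
  List.mem_of_find?_eq_some ((hμ i).symm.trans hi)

theorem countAbove_lt (hμ : IsSerialDictatorship pr q R μ) (hi : μ i = some s) :
    countAbove pr μ i s < q s := by
  simpa using List.find?_some ((hμ i).symm.trans hi)

theorem apply_eq_some_of_head? (hμ : IsSerialDictatorship pr q R μ)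
    (hhead : (acceptables (R i)).head? = some s) (hs : countAbove pr μ i s < q s) :
    μ i = some s := by
  obtain ⟨rest, hrest⟩ := List.head?_eq_some_iff.1 hhead
  rw [hμ i, hrest, List.find?_cons_of_pos (by simpa using hs)]

theorem individuallyRational {P : I → List (Option S)} {k : ℕ}
    (hμ : IsSerialDictatorship pr q (fun j => truncate (P j) k) μ) :
    IndividuallyRational P μ := by
  intro i hi
  cases hμi : μ i with
  | none => exact lt_irrefl _ (hμi ▸ hi)
  | some s =>
    have hs := hμ.mem_acceptables hμi
    rw [acceptables_truncate] at hs
    exact lt_asymm (hμi ▸ hi) (prefLt_none_of_mem_acceptables (List.mem_of_mem_take hs))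

theorem eq_of_agree_above {R' : I → List (Option S)} {ν : I → Option S}
    (hμ : IsSerialDictatorship pr q R μ) (hν : IsSerialDictatorship pr q R' ν)
    (hagree : ∀ j, pr.idxOf j < pr.idxOf i → R j = R' j) :
    ∀ j, pr.idxOf j < pr.idxOf i → μ j = ν j := by
  have key : ∀ n j, pr.idxOf j = n → pr.idxOf j < pr.idxOf i → μ j = ν j := by
    intro n
    induction n using Nat.strong_induction_on with
    | _ n ih =>
      rintro j rfl hj
      rw [hμ j, hν j, hagree j hj,
        countAbove_congr fun j' hj' => ih _ hj' j' rfl (hj'.trans hj)]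
  exact fun j => key _ j rfl

theorem countAbove_eq {R' : I → List (Option S)} {ν : I → Option S}
    (hμ : IsSerialDictatorship pr q R μ) (hν : IsSerialDictatorship pr q R' ν)
    (hagree : ∀ j, pr.idxOf j < pr.idxOf i → R j = R' j) :
    countAbove pr μ i = countAbove pr ν i :=
  countAbove_congr (hμ.eq_of_agree_above hν hagree)

end IsSerialDictatorship

end SerialDictatorship

section DeferredAcceptance

variable {I S : Type*} [DecidableEq S] {R : I → List (Option S)} {prio : S → List I}
  {q : S → ℕ} {σ : I → ℕ} {i : I} {s : S} {pr : List I}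

theorem daTarget_of_mem_daHeld (h : i ∈ daHeld R prio q σ s) : daTarget R σ i = some s := by
  simpa using List.of_mem_filter (List.mem_of_mem_take h)

theorem daHeld_eq (hc : prio s = pr) :
    daHeld R prio q σ s = (pr.filter fun j => decide (daTarget R σ j = some s)).take (q s) := by
  rw [daHeld, hc]

variable [DecidableEq I]

theorem daStep_of_mem_daHeld (h : i ∈ daHeld R prio q σ s) : daStep R prio q σ i = σ i := by
  simp [daStep, daTarget_of_mem_daHeld h, h]

theorem daTarget_daStep_of_mem_daHeld (h : i ∈ daHeld R prio q σ s) :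
    daTarget R (daStep R prio q σ) i = some s := by
  rw [daTarget, daStep_of_mem_daHeld h]
  exact daTarget_of_mem_daHeld h

variable (R prio q) in
theorem daStep_eq_or (σ : I → ℕ) (i : I) :
    daStep R prio q σ i = σ i ∨ daStep R prio q σ i = σ i + 1 := by
  unfold daStep
  split
  · exact Or.inl rfl
  · split_ifs <;> simp

theorem daStep_le_length (h : σ i ≤ (acceptables (R i)).length) :
    daStep R prio q σ i ≤ (acceptables (R i)).length := by
  unfold daStep
  split
  · exact h
  · rename_i hT
    have := (List.getElem?_eq_some_iff.1 hT).1
    split_ifs <;> omega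

theorem iterate_daStep_le_length (t : ℕ) (i : I) :
    (daStep R prio q)^[t] (fun _ => 0) i ≤ (acceptables (R i)).length := by
  induction t with
  | zero => simp
  | succ t ih =>
    rw [Function.iterate_succ_apply']
    exact daStep_le_length ih

theorem mem_daHeld_of_isFixedPt (hfix : Function.IsFixedPt (daStep R prio q) σ)
    (h : daTarget R σ i = some s) : i ∈ daHeld R prio q σ s := by
  by_contra hni
  have := congrFun hfix i
  simp [daStep, h, hni] at this

variable [Fintype I]

theorem le_countAbove_of_notMem_daHeld (hpr : ValidPrio pr) (hc : prio s = pr)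
    (hi : daTarget R σ i = some s) (hni : i ∉ daHeld R prio q σ s) :
    q s ≤ countAbove pr (daTarget R σ) i s := by
  set A := pr.filter fun j => decide (daTarget R σ j = some s)
  have hiA : i ∈ A := List.mem_filter.2 ⟨hpr.2 i, by simpa using hi⟩
  rw [daHeld_eq hc] at hni
  have hlen : (A.take (q s)).length = q s := List.length_take_of_le <| not_lt.1 fun hlt => by
    rw [List.take_of_length_le hlt.le] at hni
    exact hni hiA
  have hsorted : A.Pairwise fun a b => pr.idxOf a < pr.idxOf b :=
    hpr.1.pairwise_idxOf_lt.sublist List.filter_sublist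
  have hiDrop : i ∈ A.drop (q s) := by
    rw [← List.take_append_drop (q s) A] at hiA
    exact (List.mem_append.1 hiA).resolve_left hni
  rw [← hlen]
  refine le_countAbove_of_forall_mem ((hpr.1.filter _).sublist (List.take_sublist _ _))
    fun j hj => ⟨hsorted.rel_of_mem_take_of_mem_drop hj hiDrop, ?_⟩
  exact daTarget_of_mem_daHeld (by rwa [daHeld_eq hc])

/-- The `q s` highest-priority applicants to `s`, all above `i`, are held and keep applying. -/
theorem le_countAbove_daStep (hpr : ValidPrio pr) (hc : prio s = pr)
    (h : q s ≤ countAbove pr (daTarget R σ) i s) :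
    q s ≤ countAbove pr (daTarget R (daStep R prio q σ)) i s := by
  set A := pr.filter fun j => decide (daTarget R σ j = some s)
  have hA : q s ≤ (A.filter fun j => decide (pr.idxOf j < pr.idxOf i)).length := by
    rw [List.filter_filter]
    convert h using 1
    rw [countAbove, ← length_filter_eq_card hpr]
    simp only [Bool.decide_and]
  have hsorted : A.Pairwise fun a b => pr.idxOf a < pr.idxOf b :=
    hpr.1.pairwise_idxOf_lt.sublist List.filter_sublist
  have hlen : (A.take (q s)).length = q s :=
    List.length_take_of_le (hA.trans List.filter_sublist.length_le)
  rw [← hlen]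
  refine le_countAbove_of_forall_mem ((hpr.1.filter _).sublist (List.take_sublist _ _))
    fun j hj => ⟨hsorted.lt_of_mem_take hA hj, ?_⟩
  exact daTarget_daStep_of_mem_daHeld (by rwa [daHeld_eq hc])

variable (R q pr) in
/-- The schools that have rejected `i` at state `σ` are `(acceptables (R i)).take (σ i)`. -/
def RejectionsJustified (σ : I → ℕ) : Prop :=
  ∀ i, ∀ s ∈ (acceptables (R i)).take (σ i), q s ≤ countAbove pr (daTarget R σ) i s

theorem RejectionsJustified.daStep (hpr : ValidPrio pr) (hc : ∀ s, prio s = pr)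
    (h : RejectionsJustified R q pr σ) : RejectionsJustified R q pr (daStep R prio q σ) := by
  intro i s hs
  refine le_countAbove_daStep hpr (hc s) ?_
  rcases daStep_eq_or R prio q σ i with heq | heq
  · exact h i s (heq ▸ hs)
  · rw [heq, List.take_add_one, List.mem_append] at hs
    rcases hs with hs | hs
    · exact h i s hs
    · have hT : daTarget R σ i = some s := Option.mem_toList.1 hs
      exact le_countAbove_of_notMem_daHeld hpr (hc s) hT fun hi => by
        have := daStep_of_mem_daHeld hi
        omega

variable [Fintype S]

variable (R prio q) in
def daFinal : I → ℕ :=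
  (daStep R prio q)^[Fintype.card I * Fintype.card S + 1] (fun _ => 0)

/-- Every round moves some student down her list unless the state is final, and no student moves
past the end of her list: the total progress is a potential bounded by `|I| * |S|`. -/
theorem isFixedPt_daFinal (hR : ∀ i, (acceptables (R i)).length ≤ Fintype.card S) :
    Function.IsFixedPt (daStep R prio q) (daFinal R prio q) := by
  have hfix := Function.isFixedPt_iterate_of_potential (daStep R prio q) (fun σ => ∑ i, σ i)
    (fun _ => 0) (N := Fintype.card I * Fintype.card S) (fun t => ?_) (fun σ hσ => ?_)
  · rw [daFinal, Function.iterate_succ_apply', hfix]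
    exact hfix
  · calc ∑ i, (daStep R prio q)^[t] (fun _ => 0) i
        ≤ ∑ _i : I, Fintype.card S :=
          Finset.sum_le_sum fun i _ => (iterate_daStep_le_length t i).trans (hR i)
      _ = Fintype.card I * Fintype.card S := by simp
  · obtain ⟨i, hi⟩ := Function.ne_iff.1 hσ
    refine Finset.sum_lt_sum (fun j _ => ?_) ⟨i, Finset.mem_univ i, ?_⟩
    · rcases daStep_eq_or R prio q σ j with h | h <;> omega
    · rcases daStep_eq_or R prio q σ i with h | h <;> omega

theorem GS_eq_daTarget (hR : ∀ i, (acceptables (R i)).length ≤ Fintype.card S) :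
    GS R prio q = daTarget R (daFinal R prio q) := by
  funext i
  rw [GS, ← daFinal]
  split
  · rename_i h; exact h.symm
  · rename_i s h; rw [if_pos (mem_daHeld_of_isFixedPt (isFixedPt_daFinal hR) h), h]

theorem isMatching_GS (hR : ∀ i, (acceptables (R i)).length ≤ Fintype.card S) :
    IsMatching q (GS R prio q) := by
  intro s
  rw [GS_eq_daTarget hR]
  calc (Finset.univ.filter fun j => daTarget R (daFinal R prio q) j = some s).card
      ≤ (daHeld R prio q (daFinal R prio q) s).toFinset.card :=
        Finset.card_le_card fun j hj => List.mem_toFinset.2 <|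
          mem_daHeld_of_isFixedPt (isFixedPt_daFinal hR) (Finset.mem_filter.1 hj).2
    _ ≤ (daHeld R prio q (daFinal R prio q) s).length := List.toFinset_card_le _
    _ ≤ q s := List.length_take_le _ _

theorem rejectionsJustified_daFinal (hpr : ValidPrio pr) (hc : ∀ s, prio s = pr) :
    RejectionsJustified R q pr (daFinal R prio q) := by
  unfold daFinal
  induction Fintype.card I * Fintype.card S + 1 with
  | zero => intro i s hs; simp at hs
  | succ t ih =>
    rw [Function.iterate_succ_apply']
    exact ih.daStep hpr hc

theorem isSerialDictatorship_GS (hpr : ValidPrio pr) (hc : ∀ s, prio s = pr)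
    (hR : ∀ i, (acceptables (R i)).Nodup) : IsSerialDictatorship pr q R (GS R prio q) := by
  have hlen i := (hR i).length_le_card
  have hmatch := isMatching_GS (prio := prio) (q := q) hlen
  have hrej := rejectionsJustified_daFinal (R := R) (q := q) hpr hc
  rw [GS_eq_daTarget hlen] at hmatch ⊢
  intro i
  refine (List.find?_eq_getElem?_of_take (fun s hs => ?_) (fun s hs => ?_)).symm
  · simpa using hrej i s hs
  · simpa using countAbove_lt_of_apply_eq_some hmatch (i := i) hs (lt_irrefl _)

end DeferredAcceptance

theorem exists_common_prio {I S : Type*} {prio : S → List I} [Fintype I]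
    (hprio : ∀ s, ValidPrio (prio s)) (hcp : ∀ s s', prio s = prio s') :
    ∃ pr, ValidPrio pr ∧ ∀ s, prio s = pr := by
  rcases isEmpty_or_nonempty S with hS | ⟨⟨s₀⟩⟩
  · exact ⟨Finset.univ.toList, ⟨Finset.nodup_toList _, fun i => by simp⟩, isEmptyElim⟩
  · exact ⟨prio s₀, hprio s₀, fun s => hcp s s₀⟩

section Truncated

variable {I S : Type*} [Fintype I] [DecidableEq I] [Fintype S] [DecidableEq S]
  {R : I → List (Option S)} {prio : S → List I} {pr : List I} (q : S → ℕ) (k : ℕ)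

theorem isMatching_GSk (hR : ∀ i, (R i).Nodup) : IsMatching q (GSk k R prio q) :=
  isMatching_GS fun i => (nodup_acceptables_truncate (hR i) k).length_le_card

theorem isSerialDictatorship_GSk (hpr : ValidPrio pr) (hc : ∀ s, prio s = pr)
    (hR : ∀ i, (R i).Nodup) :
    IsSerialDictatorship pr q (fun i => truncate (R i) k) (GSk k R prio q) :=
  isSerialDictatorship_GS hpr hc fun i => nodup_acceptables_truncate (hR i) k

theorem isSerialDictatorship_GSk_update (hpr : ValidPrio pr) (hc : ∀ s, prio s = pr)
    (hR : ∀ i, (R i).Nodup) {i : I} {Q : List (Option S)} (hQ : Q.Nodup) :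
    IsSerialDictatorship pr q (fun j => truncate (Function.update R i Q j) k)
      (GSk k (Function.update R i Q) prio q) :=
  isSerialDictatorship_GSk q k hpr hc <|
    (Function.forall_update_iff R fun _ l => l.Nodup).2 ⟨hQ, fun j _ => hR j⟩

theorem countAbove_GSk_update (hpr : ValidPrio pr) (hc : ∀ s, prio s = pr)
    (hR : ∀ i, (R i).Nodup) {i : I} {Q : List (Option S)} (hQ : Q.Nodup) :
    countAbove pr (GSk k (Function.update R i Q) prio q) i = countAbove pr (GSk k R prio q) i := by
  refine (isSerialDictatorship_GSk_update q k hpr hc hR hQ).countAbove_eq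
    (isSerialDictatorship_GSk q k hpr hc hR) fun j hj => ?_
  rw [Function.update_of_ne (ne_of_apply_ne (pr.idxOf ·) hj.ne)]

end Truncated

variable {I S : Type*} [Fintype I] [DecidableEq I] [Fintype S] [DecidableEq S]

theorem sdk_stable_iff_not_manipulable_general
    {I S : Type*} [Fintype I] [DecidableEq I] [Fintype S] [DecidableEq S]
    (P : I → List (Option S)) (prio : S → List I) (q : S → ℕ)
    (hP : ∀ i, ValidPref (P i)) (hprio : ∀ s, ValidPrio (prio s))
    (hcp : ∀ s s' : S, prio s = prio s')
    (k : ℕ) (hk : 1 < k) :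
    IsStable P prio q (GSk k P prio q) ↔ NotManipulable (fun R => GSk k R prio q) P := by
  obtain ⟨pr, hpr, hc⟩ := exists_common_prio hprio hcp
  have hnodup i := (hP i).1
  have hμ := isSerialDictatorship_GSk q k hpr hc hnodup
  have hblocks {i s} := blocks_iff_countAbove_lt (P := P) (i := i) hpr (hc s)
    (isMatching_GSk q k (prio := prio) hnodup)
  constructor
  · rintro ⟨-, hstable⟩ i ⟨Q, hQ, hbetter⟩
    have hν := isSerialDictatorship_GSk_update q k hpr hc hnodup (i := i) hQ.1
    beta_reduce at hbetter
    obtain ⟨s, hs⟩ : ∃ s, GSk k (Function.update P i Q) prio q i = some s :=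
      Option.ne_none_iff_exists'.1 fun hnone => hμ.individuallyRational i (hnone ▸ hbetter)
    refine hstable i ⟨s, hblocks.2 ⟨hs ▸ hbetter, ?_⟩⟩
    rw [← countAbove_GSk_update q k hpr hc hnodup hQ.1]
    exact hν.countAbove_lt hs
  · refine fun hnm => ⟨hμ.individuallyRational, fun i ⟨s, hblock⟩ =>
      hnm i ⟨moveToTop s (P i), validPref_moveToTop (hP i) s, ?_⟩⟩
    obtain ⟨hbetter, hseat⟩ := hblocks.1 hblock
    have hQ := validPref_moveToTop (hP i) s
    have hν := isSerialDictatorship_GSk_update q k hpr hc hnodup (i := i) hQ.1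
    have hs : GSk k (Function.update P i (moveToTop s (P i))) prio q i = some s :=
      hν.apply_eq_some_of_head?
        (by simpa using head?_acceptables_truncate_moveToTop s (P i) (by omega))
        (by rw [countAbove_GSk_update q k hpr hc hnodup hQ.1]; exact hseat)
    beta_reduce
    rwa [hs]

/-- Proposition 3: with common priority and `k > 1`, the constrained
serial dictatorship `SD^k` (that is, `GS^k` under common priority) is stable at
`(P,≻,q)` iff it is not manipulable at `(P,≻,q)`. -/
theorem sdk_stable_iff_not_manipulable
    {I S : Type*} [Fintype I] [DecidableEq I] [Fintype S] [DecidableEq S]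
    (hIS : Fintype.card S < Fintype.card I)
    (P : I → List (Option S)) (prio : S → List I) (q : S → ℕ)
    (hP : ∀ i, ValidPref (P i)) (hprio : ∀ s, ValidPrio (prio s))
    (hcp : ∀ s s' : S, prio s = prio s')
    (k : ℕ) (hk : 1 < k) :
    IsStable P prio q (GSk k P prio q) ↔ NotManipulable (fun R => GSk k R prio q) P :=
  sdk_stable_iff_not_manipulable_general P prio q hP hprio hcp k hk

end SchoolChoice
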